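/- The grounding kernel K_G of a directed graph G is a grounding set of G. -/

import Mathlib

/-!
If `U` meets every directed cycle, the edges `a → b` with `a ∉ U` form an acyclic, hence (on a
finite vertex set) well-founded, relation. `R*(U)` is closed under `R`, because the finitely many
predecessors of a vertex all enter it at a common stage; so well-founded induction puts every vertex
into `R*(U)`. The kernel meets every cycle: a vertex off the kernel lies in `V'`, and a cycle through
a vertex whose strongly connected component is `{u}` is a self-loop at `u`.
-/

section Grounding

open Relation Set

variable {V : Type*}

def groundingStep (E : V → V → Prop) (U : Set V) : Set V :=
  U ∪ {v | ∀ u, E u v → u ∈ U}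

def groundingClosure (E : V → V → Prop) (U : Set V) : Set V :=
  ⋃ k : ℕ, (groundingStep E)^[k] U

section Closure

variable {E : V → V → Prop}

lemma subset_groundingStep (U : Set V) : U ⊆ groundingStep E U :=
  subset_union_left

lemma monotone_iterate_groundingStep (U : Set V) :
    Monotone fun k : ℕ => (groundingStep E)^[k] U :=
  monotone_nat_of_le_succ fun k => by
    rw [Function.iterate_succ_apply']
    exact subset_groundingStep _

lemma subset_groundingClosure (U : Set V) : U ⊆ groundingClosure E U :=
  subset_iUnion_of_subset 0 subset_rfl

lemma mem_groundingClosure_of_forall_pred [Finite V] {U : Set V} {v : V}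
    (h : ∀ u, E u v → u ∈ groundingClosure E U) : v ∈ groundingClosure E U := by
  have hstage : ∀ u, ∃ k : ℕ, E u v → u ∈ (groundingStep E)^[k] U := fun u => by
    by_cases huv : E u v
    · obtain ⟨k, hk⟩ := mem_iUnion.1 (h u huv)
      exact ⟨k, fun _ => hk⟩
    · exact ⟨0, fun h' => (huv h').elim⟩
  choose stage hstage using hstage
  obtain ⟨M, hM⟩ := Finite.exists_le stage
  refine mem_iUnion.2 ⟨M + 1, ?_⟩
  rw [Function.iterate_succ_apply']
  exact Or.inr fun u huv => monotone_iterate_groundingStep U (hM u) (hstage u huv)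

theorem groundingClosure_eq_univ_of_acyclic [Finite V] {U : Set V}
    (hU : ∀ u, ¬ TransGen (fun a b => E a b ∧ a ∉ U) u u) : groundingClosure E U = univ := by
  set r : V → V → Prop := fun a b => E a b ∧ a ∉ U
  have : Std.Irrefl (TransGen r) := ⟨hU⟩
  have hwf : WellFounded r :=
    (Finite.wellFounded_of_trans_of_irrefl (TransGen r)).mono fun _ _ => TransGen.single
  refine eq_univ_of_forall fun v => hwf.induction v fun v ih => ?_
  refine mem_groundingClosure_of_forall_pred fun u huv => ?_
  by_cases hu : u ∈ U
  · exact subset_groundingClosure U hu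
  · exact ih u ⟨huv, hu⟩

end Closure

lemma self_loop_of_transGen_self {E : V → V → Prop} {u : V}
    (hscc : {w | ReflTransGen E u w ∧ ReflTransGen E w u} = {u}) (hcycle : TransGen E u u) :
    E u u := by
  obtain ⟨c, huc, hcu⟩ := TransGen.head'_iff.1 hcycle
  have hc : c = u := hscc.subset ⟨.single huc, hcu⟩
  exact hc ▸ huc

end Grounding

theorem kernel_is_grounding_general {V : Type*} [Fintype V] (E : V → V → Prop)
    (R : Set V → Set V)
    (hR : ∀ U, R U = U ∪ {v | ∀ u, E u v → u ∈ U})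
    (Rstar : Set V → Set V)
    (hRstar : ∀ U, Rstar U = ⋃ k : ℕ, R^[k] U)
    -- `V'`: vertices whose strongly connected component is a singleton with no self-loop
    (V' : Set V)
    (hV' : V' = {u | {w | Relation.ReflTransGen E u w ∧
      Relation.ReflTransGen E w u} = {u} ∧ ¬ E u u})
    -- `N*(u)`: vertices reachable from `u` (possibly by the trivial path)
    (Nstar : V → Set V)
    (K : Set V)
    (hK : K = Set.univ \ {u | u ∈ V' ∧ Nstar u ⊆ V'}) :
    Rstar K = Set.univ := by
  have hR_eq : R = groundingStep E := funext hR
  rw [hRstar, hR_eq]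
  refine groundingClosure_eq_univ_of_acyclic fun u hcycle => ?_
  obtain ⟨_, ⟨_, huK⟩, _⟩ := Relation.TransGen.head'_iff.1 hcycle
  have huV' : u ∈ V' := by
    by_contra hu
    exact huK (hK ▸ ⟨Set.mem_univ u, fun h => hu h.1⟩)
  rw [hV'] at huV'
  exact huV'.2 <| self_loop_of_transGen_self huV'.1 <|
    Relation.TransGen.mono (fun _ _ h => h.1) _ _ hcycle

/-- The grounding kernel of `G` is a grounding set of `G`. -/
theorem kernel_is_grounding {V : Type*} [Fintype V] (E : V → V → Prop)
    (R : Set V → Set V)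
    (hR : ∀ U, R U = U ∪ {v | ∀ u, E u v → u ∈ U})
    (Rstar : Set V → Set V)
    (hRstar : ∀ U, Rstar U = ⋃ k : ℕ, R^[k] U)
    -- `V'`: vertices whose strongly connected component is a singleton with no self-loop
    (V' : Set V)
    (hV' : V' = {u | {w | Relation.ReflTransGen E u w ∧
      Relation.ReflTransGen E w u} = {u} ∧ ¬ E u u})
    -- `N*(u)`: vertices reachable from `u` (possibly by the trivial path)
    (Nstar : V → Set V)
    (hNstar : ∀ u, Nstar u = {v | Relation.ReflTransGen E u v})
    (K : Set V)
    (hK : K = Set.univ \ {u | u ∈ V' ∧ Nstar u ⊆ V'}) :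
    Rstar K = Set.univ :=
  kernel_is_grounding_general E R hR Rstar hRstar V' hV' Nstar K hK
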